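/- Let ω_x ⊂ (0,1) be a nonempty open set. Then there exists C > 0 such that for every real number z and all functions u ∈ C²([0,1], ℂ), f, g ∈ C¹([0,1], ℂ) satisfying u'' + z u = f + g' on [0,1] and u(0) = u(1) = 0, one has ∫₀¹ |u(x)|² dx ≤ C ( ∫₀¹ ( |f(x)|² + |g(x)|² ) dx + ∫_{ω_x} |u(x)|² dx ). The constant C is independent of z ∈ ℝ. -/

import Mathlib

/-!
Write `p = u' - g`, so that the equation becomes the first-order system `u' = p + g`,
`p' = f - z u`. For `z ≤ 1/2` testing the equation against `conj u` and using the Poincaré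
inequality `‖u‖ ≤ ‖u'‖` gives `‖u‖² ≤ C (‖f‖² + ‖g‖²)` without any observation. For
`z = μ² > 1/2`, variation of constants applied to `p ± iμu` (which solve
`w' = ±iμ w + (f ± iμ g)`) shows that `u` is within `‖f‖₁/μ + ‖g‖₁` of `(p 0 / μ) sin (μ x)`
uniformly on `[0,1]`. Since `∫_α^β sin² (μx) dx ≥ (β - α)³/96` for all `μ² ≥ 1/2`, the mass of
`u` on an interval `[α, β] ⊆ ω` controls the amplitude `p 0 / μ`, hence all of `u`.
-/

open MeasureTheory Set intervalIntegral ComplexConjugate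

theorem sq_integral_le_mul_integral_sq {φ : ℝ → ℝ} {a b : ℝ} (hab : a ≤ b)
    (hφ : ContinuousOn φ (Icc a b)) :
    (∫ x in a..b, φ x) ^ 2 ≤ (b - a) * ∫ x in a..b, φ x ^ 2 := by
  have hi : IntervalIntegrable φ volume a b := hφ.intervalIntegrable_of_Icc hab
  have hi2 : IntervalIntegrable (fun x => φ x ^ 2) volume a b :=
    (hφ.pow 2).intervalIntegrable_of_Icc hab
  generalize hI : ∫ x in a..b, φ x = I
  have hexp : ∫ x in a..b, ((b - a) * φ x - I) ^ 2
      = (b - a) * ((b - a) * (∫ x in a..b, φ x ^ 2) - I ^ 2) := by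
    have : (fun x => ((b - a) * φ x - I) ^ 2)
        = fun x => (b - a) ^ 2 * φ x ^ 2 - 2 * (b - a) * I * φ x + I ^ 2 := by
      ext x; ring
    rw [this, integral_add ((hi2.const_mul _).sub (hi.const_mul _)) intervalIntegrable_const,
      integral_sub (hi2.const_mul _) (hi.const_mul _), intervalIntegral.integral_const_mul,
      intervalIntegral.integral_const_mul, hI, intervalIntegral.integral_const, smul_eq_mul]
    ring
  have hvar : 0 ≤ (b - a) * ((b - a) * (∫ x in a..b, φ x ^ 2) - I ^ 2) :=
    hexp ▸ integral_nonneg hab fun _ _ => sq_nonneg _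
  rcases hab.eq_or_lt with rfl | hlt
  · simp [← hI]
  · linarith [(mul_nonneg_iff_of_pos_left (sub_pos.2 hlt)).1 hvar]

theorem norm_integral_mul_conj_le {v w : ℝ → ℂ} {a b ε : ℝ} (hab : a ≤ b)
    (hv : ContinuousOn v (Icc a b)) (hw : ContinuousOn w (Icc a b)) (hε : 0 < ε) :
    ‖∫ x in a..b, v x * conj (w x)‖
      ≤ ε * (∫ x in a..b, ‖v x‖ ^ 2) + (4 * ε)⁻¹ * ∫ x in a..b, ‖w x‖ ^ 2 := by
  have hv2 : IntervalIntegrable (fun x => ‖v x‖ ^ 2) volume a b :=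
    (hv.norm.pow 2).intervalIntegrable_of_Icc hab
  have hw2 : IntervalIntegrable (fun x => ‖w x‖ ^ 2) volume a b :=
    (hw.norm.pow 2).intervalIntegrable_of_Icc hab
  rw [← intervalIntegral.integral_const_mul, ← intervalIntegral.integral_const_mul,
    ← integral_add (hv2.const_mul _) (hw2.const_mul _)]
  refine (intervalIntegral.norm_integral_le_integral_norm hab).trans (integral_mono_on hab
    ((hv.mul (Complex.continuous_conj.comp_continuousOn hw)).norm.intervalIntegrable_of_Icc hab)
    ((hv2.const_mul _).add (hw2.const_mul _)) fun x _ => ?_)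
  rw [norm_mul, Complex.norm_conj]
  have h4ε : 0 < 4 * ε := by positivity
  rw [← sub_nonneg]
  have key : ε * ‖v x‖ ^ 2 + (4 * ε)⁻¹ * ‖w x‖ ^ 2 - ‖v x‖ * ‖w x‖
      = (4 * ε)⁻¹ * (2 * ε * ‖v x‖ - ‖w x‖) ^ 2 := by
    field_simp; ring
  rw [key]; positivity

theorem integral_norm_sq_le_integral_norm_sq_of_hasDerivAt {u v : ℝ → ℂ}
    (hu : ContinuousOn u (Icc 0 1)) (hv : ContinuousOn v (Icc 0 1))
    (hderiv : ∀ x ∈ Ioo (0 : ℝ) 1, HasDerivAt u (v x) x) (hu0 : u 0 = 0) :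
    ∫ x in 0..1, ‖u x‖ ^ 2 ≤ ∫ x in 0..1, ‖v x‖ ^ 2 := by
  have hpt : ∀ x ∈ Icc (0 : ℝ) 1, ‖u x‖ ≤ ∫ t in 0..1, ‖v t‖ := fun x hx => by
    have hIcc : Icc 0 x ⊆ Icc (0 : ℝ) 1 := Icc_subset_Icc_right hx.2
    have hftc := integral_eq_sub_of_hasDerivAt_of_le hx.1 (hu.mono hIcc)
      (fun t ht => hderiv t (Ioo_subset_Ioo_right hx.2 ht))
      ((hv.mono hIcc).intervalIntegrable_of_Icc hx.1)
    rw [hu0, sub_zero] at hftc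
    calc ‖u x‖ = ‖∫ t in 0..x, v t‖ := by rw [hftc]
      _ ≤ ∫ t in 0..x, ‖v t‖ := intervalIntegral.norm_integral_le_integral_norm hx.1
      _ ≤ ∫ t in 0..1, ‖v t‖ := integral_mono_interval le_rfl hx.1 hx.2
          (ae_of_all _ fun t => norm_nonneg _) (hv.norm.intervalIntegrable_of_Icc zero_le_one)
  calc ∫ x in 0..1, ‖u x‖ ^ 2 ≤ ∫ _ in (0 : ℝ)..1, (∫ t in 0..1, ‖v t‖) ^ 2 :=
        integral_mono_on zero_le_one ((hu.norm.pow 2).intervalIntegrable_of_Icc zero_le_one)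
          intervalIntegrable_const fun x hx => pow_le_pow_left₀ (norm_nonneg _) (hpt x hx) 2
    _ = (∫ t in 0..1, ‖v t‖) ^ 2 := by simp
    _ ≤ ∫ x in 0..1, ‖v x‖ ^ 2 := by
        simpa using sq_integral_le_mul_integral_sq zero_le_one hv.norm

theorem DifferentiableOn.hasDerivAt_derivWithin_Icc {E : Type*} [NormedAddCommGroup E]
    [NormedSpace ℝ E] {f : ℝ → E} {a b x : ℝ} (hf : DifferentiableOn ℝ f (Icc a b))
    (hx : x ∈ Ioo a b) : HasDerivAt f (derivWithin f (Icc a b) x) x :=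
  (hf x (Ioo_subset_Icc_self hx)).hasDerivWithinAt.hasDerivAt (Icc_mem_nhds hx.1 hx.2)

theorem eq_exp_mul_add_integral_of_hasDerivAt {w r : ℝ → ℂ} {ν : ℂ} {a b : ℝ} (hab : a ≤ b)
    (hw : ContinuousOn w (Icc a b)) (hr : ContinuousOn r (Icc a b))
    (hderiv : ∀ t ∈ Ioo a b, HasDerivAt w (ν * w t + r t) t) :
    w b = Complex.exp (ν * (b - a)) * w a
      + ∫ t in a..b, Complex.exp (ν * (b - t)) * r t := by
  have hexp : ∀ t : ℝ, HasDerivAt (fun t : ℝ => Complex.exp (-ν * t))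
      (Complex.exp (-ν * t) * -ν) t := fun t => by
    simpa using ((hasDerivAt_id t).ofReal_comp.const_mul (-ν)).cexp
  have hcexp : ContinuousOn (fun t : ℝ => Complex.exp (-ν * t)) (Icc a b) := by fun_prop
  have hftc := integral_eq_sub_of_hasDerivAt_of_le hab (hcexp.mul hw)
    (fun t ht => ((hexp t).mul (hderiv t ht)).congr_deriv
      (by ring : _ = Complex.exp (-ν * t) * r t))
    ((hcexp.mul hr).intervalIntegrable_of_Icc hab)
  have hshift : ∫ t in a..b, Complex.exp (ν * (b - t)) * r t
      = Complex.exp (ν * b) * ∫ t in a..b, Complex.exp (-ν * t) * r t := by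
    rw [← intervalIntegral.integral_const_mul]
    congr 1; ext t
    rw [← mul_assoc, ← Complex.exp_add]; ring_nf
  have hb : Complex.exp (ν * b) * Complex.exp (-ν * b) = 1 := by
    rw [← Complex.exp_add]; ring_nf; exact Complex.exp_zero
  have ha : Complex.exp (ν * b) * Complex.exp (-ν * a) = Complex.exp (ν * (b - a)) := by
    rw [← Complex.exp_add]; ring_nf
  rw [hshift, hftc]
  simp only [Pi.mul_apply]
  linear_combination (-w b) * hb + w a * ha

theorem norm_integral_exp_mul_le {f g : ℝ → ℂ} {ν : ℂ} (hν : ν.re = 0)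
    (hf : ContinuousOn f (Icc 0 1)) (hg : ContinuousOn g (Icc 0 1)) {x : ℝ}
    (hx : x ∈ Icc (0 : ℝ) 1) :
    ‖∫ t in 0..x, Complex.exp (ν * (x - t)) * (f t + ν * g t)‖
      ≤ (∫ t in 0..1, ‖f t‖) + ‖ν‖ * ∫ t in 0..1, ‖g t‖ := by
  have hbound : ContinuousOn (fun t => ‖f t‖ + ‖ν‖ * ‖g t‖) (Icc 0 1) :=
    hf.norm.add (continuousOn_const.mul hg.norm)
  have hIcc : Icc 0 x ⊆ Icc (0 : ℝ) 1 := Icc_subset_Icc_right hx.2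
  calc ‖∫ t in 0..x, Complex.exp (ν * (x - t)) * (f t + ν * g t)‖
      ≤ ∫ t in 0..x, ‖Complex.exp (ν * (x - t)) * (f t + ν * g t)‖ :=
        intervalIntegral.norm_integral_le_integral_norm hx.1
    _ ≤ ∫ t in 0..x, (‖f t‖ + ‖ν‖ * ‖g t‖) := by
        refine integral_mono_on hx.1 ?_ ((hbound.mono hIcc).intervalIntegrable_of_Icc hx.1)
          fun t _ => ?_
        · exact (((by fun_prop : Continuous fun t : ℝ => Complex.exp (ν * (x - t))).continuousOn.mul
            ((hf.add (continuousOn_const.mul hg)).mono hIcc)).norm).intervalIntegrable_of_Icc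
              hx.1
        · rw [norm_mul, Complex.norm_exp]
          simp only [Complex.mul_re, hν, Complex.sub_re, Complex.ofReal_re, Complex.sub_im,
            Complex.ofReal_im, zero_mul, sub_zero, mul_zero, Real.exp_zero, one_mul]
          exact (norm_add_le _ _).trans_eq (by rw [norm_mul])
    _ ≤ ∫ t in 0..1, (‖f t‖ + ‖ν‖ * ‖g t‖) :=
        integral_mono_interval le_rfl hx.1 hx.2 (ae_of_all _ fun t => by positivity)
          (hbound.intervalIntegrable_of_Icc zero_le_one)
    _ = (∫ t in 0..1, ‖f t‖) + ‖ν‖ * ∫ t in 0..1, ‖g t‖ := by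
        rw [integral_add (hf.norm.intervalIntegrable_of_Icc zero_le_one)
          ((hg.norm.intervalIntegrable_of_Icc zero_le_one).const_mul _),
          intervalIntegral.integral_const_mul]

theorem cube_div_le_sub_sin {t : ℝ} (ht : 0 ≤ t) (ht2 : t ≤ 2) :
    t ^ 3 / 24 ≤ t - Real.sin t := by
  have hcos : ∀ s ∈ Icc 0 t, s ^ 2 / 8 ≤ 1 - Real.cos s := by
    intro s hs
    have hπ := Real.pi_le_four
    have hs' : |s| ≤ Real.pi := by
      rw [abs_of_nonneg hs.1]; linarith [Real.two_le_pi, hs.2]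
    have h := Real.cos_le_one_sub_mul_cos_sq hs'
    have : 2 / Real.pi ^ 2 * s ^ 2 ≥ s ^ 2 / 8 := by
      rw [ge_iff_le, div_mul_eq_mul_div, div_le_div_iff₀ (by norm_num) (by positivity)]
      nlinarith [mul_le_mul_of_nonneg_left (pow_le_pow_left₀ Real.pi_pos.le hπ 2) (sq_nonneg s)]
    linarith
  have h := integral_mono_on ht
    ((by fun_prop : Continuous fun s : ℝ => s ^ 2 / 8).intervalIntegrable (μ := volume) _ _)
    ((by fun_prop : Continuous fun s => 1 - Real.cos s).intervalIntegrable _ _) hcos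
  rw [intervalIntegral.integral_div, integral_pow, integral_sub intervalIntegrable_const
    (Real.continuous_cos.intervalIntegrable _ _), integral_cos] at h
  norm_num at h
  linarith

theorem integral_sin_mul_sq_eq {α β μ : ℝ} (hμ : μ ≠ 0) :
    ∫ x in α..β, Real.sin (μ * x) ^ 2
      = (μ * (β - α) - Real.sin (μ * (β - α)) * Real.cos (μ * (α + β))) / (2 * μ) := by
  rw [intervalIntegral.integral_comp_mul_left (fun y => Real.sin y ^ 2) hμ, integral_sin_sq,
    smul_eq_mul]
  have key : Real.sin (μ * α) * Real.cos (μ * α) - Real.sin (μ * β) * Real.cos (μ * β)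
      = -(Real.sin (μ * (β - α)) * Real.cos (μ * (α + β))) := by
    rw [mul_sub, mul_add, Real.sin_sub, Real.cos_add]
    linear_combination Real.sin (μ * β) * Real.cos (μ * β) * Real.sin_sq_add_cos_sq (μ * α)
      - Real.sin (μ * α) * Real.cos (μ * α) * Real.sin_sq_add_cos_sq (μ * β)
  rw [key]
  field_simp
  ring

theorem cube_div_le_integral_sin_mul_sq {α β μ : ℝ} (hαβ : α ≤ β) (hL : β - α ≤ 1)
    (hμ : 0 < μ) (hμ2 : 1 / 2 ≤ μ ^ 2) :
    (β - α) ^ 3 / 96 ≤ ∫ x in α..β, Real.sin (μ * x) ^ 2 := by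
  set L := β - α
  have hL0 : 0 ≤ L := sub_nonneg.2 hαβ
  have hlow : (μ * L - |Real.sin (μ * L)|) / (2 * μ) ≤ ∫ x in α..β, Real.sin (μ * x) ^ 2 := by
    rw [integral_sin_mul_sq_eq hμ.ne']
    gcongr
    calc Real.sin (μ * L) * Real.cos (μ * (α + β)) ≤ |Real.sin (μ * L) * Real.cos (μ * (α + β))| :=
          le_abs_self _
      _ ≤ |Real.sin (μ * L)| := by
          rw [abs_mul]
          exact mul_le_of_le_one_right (abs_nonneg _) (Real.abs_cos_le_one _)
  refine le_trans ?_ hlow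
  rw [le_div_iff₀ (by positivity)]
  rcases le_total (μ * L) 2 with hsmall | hbig
  · have hsin : 0 ≤ Real.sin (μ * L) :=
      Real.sin_nonneg_of_nonneg_of_le_pi (by positivity) (hsmall.trans Real.two_le_pi)
    rw [abs_of_nonneg hsin]
    have := cube_div_le_sub_sin (by positivity) hsmall
    nlinarith [pow_nonneg hL0 3, mul_nonneg hμ.le (pow_nonneg hL0 3)]
  · have := Real.abs_sin_le_one (μ * L)
    have hL3 : L ^ 3 ≤ L := by nlinarith [mul_nonneg hL0 hL0]
    nlinarith [mul_le_mul_of_nonneg_left hL3 hμ.le]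

theorem integral_norm_sq_le_of_norm_sub_mul_le {u : ℝ → ℂ} {φ : ℝ → ℝ} {a : ℂ} {R c α β : ℝ}
    (hu : ContinuousOn u (Icc 0 1)) (hφ : ContinuousOn φ (Icc α β))
    (hφ1 : ∀ x ∈ Icc (0 : ℝ) 1, |φ x| ≤ 1) (hαβ : α ≤ β) (hsub : Icc α β ⊆ Icc 0 1)
    (hc : 0 < c) (hφc : c ≤ ∫ x in α..β, φ x ^ 2)
    (hR : ∀ x ∈ Icc (0 : ℝ) 1, ‖u x - a * φ x‖ ≤ R) :
    ∫ x in 0..1, ‖u x‖ ^ 2 ≤ 4 / c * (∫ x in α..β, ‖u x‖ ^ 2) + (4 / c + 2) * R ^ 2 := by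
  have hR0 : 0 ≤ R := (norm_nonneg _).trans (hR 0 ⟨le_rfl, zero_le_one⟩)
  have hL : β - α ≤ 1 := by linarith [(hsub ⟨le_rfl, hαβ⟩).1, (hsub ⟨hαβ, le_rfl⟩).2]
  have hnorm : ∀ x, ‖a * φ x‖ = ‖a‖ * |φ x| := fun x => by
    rw [norm_mul, Complex.norm_real, Real.norm_eq_abs]
  have hupper : ∀ x ∈ Icc (0 : ℝ) 1, ‖u x‖ ^ 2 ≤ 2 * ‖a‖ ^ 2 + 2 * R ^ 2 := fun x hx => by
    have h1 := (norm_le_norm_add_norm_sub' (u x) (a * φ x)).trans (add_le_add le_rfl (hR x hx))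
    have h2 : ‖a * φ x‖ ≤ ‖a‖ := by
      rw [hnorm]; exact mul_le_of_le_one_right (norm_nonneg _) (hφ1 x hx)
    nlinarith [norm_nonneg (u x), sq_nonneg (‖a‖ - R)]
  have hlower : ∀ x ∈ Icc α β, ‖a‖ ^ 2 * φ x ^ 2 ≤ 2 * ‖u x‖ ^ 2 + 2 * R ^ 2 := fun x hx => by
    have h1 := (norm_le_norm_add_norm_sub (u x) (a * φ x)).trans
      (add_le_add le_rfl (hR x (hsub hx)))
    rw [hnorm] at h1
    have h2 : ‖a‖ ^ 2 * φ x ^ 2 = (‖a‖ * |φ x|) ^ 2 := by rw [mul_pow, sq_abs]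
    rw [h2]
    nlinarith [norm_nonneg (u x), sq_nonneg (‖u x‖ - R),
      mul_nonneg (norm_nonneg a) (abs_nonneg (φ x))]
  have hu2 : ContinuousOn (fun x => ‖u x‖ ^ 2) (Icc 0 1) := hu.norm.pow 2
  have hN : ∫ x in 0..1, ‖u x‖ ^ 2 ≤ 2 * ‖a‖ ^ 2 + 2 * R ^ 2 := by
    simpa using integral_mono_on (μ := volume) zero_le_one
      (hu2.intervalIntegrable_of_Icc zero_le_one) intervalIntegrable_const hupper
  have hW : ‖a‖ ^ 2 * c ≤ 2 * (∫ x in α..β, ‖u x‖ ^ 2) + 2 * R ^ 2 := by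
    have hφ2 : IntervalIntegrable (fun x => φ x ^ 2) volume α β :=
      (hφ.pow 2).intervalIntegrable_of_Icc hαβ
    have hint := integral_mono_on hαβ (hφ2.const_mul (‖a‖ ^ 2))
      (((hu2.mono hsub).intervalIntegrable_of_Icc hαβ).const_mul 2 |>.add intervalIntegrable_const)
      hlower
    rw [intervalIntegral.integral_const_mul, integral_add
      (((hu2.mono hsub).intervalIntegrable_of_Icc hαβ).const_mul 2) intervalIntegrable_const,
      intervalIntegral.integral_const_mul, intervalIntegral.integral_const, smul_eq_mul] at hint
    nlinarith [mul_le_mul_of_nonneg_left hφc (sq_nonneg ‖a‖),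
      mul_le_mul_of_nonneg_right hL (by positivity : 0 ≤ 2 * R ^ 2)]
  have ha : ‖a‖ ^ 2 ≤ (2 * (∫ x in α..β, ‖u x‖ ^ 2) + 2 * R ^ 2) / c := by
    rwa [le_div_iff₀ hc]
  calc ∫ x in 0..1, ‖u x‖ ^ 2 ≤ 2 * ‖a‖ ^ 2 + 2 * R ^ 2 := hN
    _ ≤ 2 * ((2 * (∫ x in α..β, ‖u x‖ ^ 2) + 2 * R ^ 2) / c) + 2 * R ^ 2 := by gcongr
    _ = 4 / c * (∫ x in α..β, ‖u x‖ ^ 2) + (4 / c + 2) * R ^ 2 := by ring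

/-- `p` stands for `u' - g`: in this form `u'' + z u = f + g'` needs no derivative of `g`. -/
structure SolvesFirstOrderSystem (z : ℝ) (u p f g : ℝ → ℂ) : Prop where
  continuousOn_u : ContinuousOn u (Icc 0 1)
  continuousOn_p : ContinuousOn p (Icc 0 1)
  continuousOn_f : ContinuousOn f (Icc 0 1)
  continuousOn_g : ContinuousOn g (Icc 0 1)
  hasDerivAt_u : ∀ x ∈ Ioo (0 : ℝ) 1, HasDerivAt u (p x + g x) x
  hasDerivAt_p : ∀ x ∈ Ioo (0 : ℝ) 1, HasDerivAt p (f x - z * u x) x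

theorem SolvesFirstOrderSystem.of_contDiffOn {z : ℝ} {u f g : ℝ → ℂ}
    (hu : ContDiffOn ℝ 2 u (Icc 0 1)) (hf : ContinuousOn f (Icc 0 1))
    (hg : DifferentiableOn ℝ g (Icc 0 1))
    (hpde : ∀ x ∈ Icc (0 : ℝ) 1,
      derivWithin (derivWithin u (Icc 0 1)) (Icc 0 1) x + z * u x
        = f x + derivWithin g (Icc 0 1) x) :
    SolvesFirstOrderSystem z u (fun x => derivWithin u (Icc 0 1) x - g x) f g := by
  have hu' : ContDiffOn ℝ 1 (derivWithin u (Icc 0 1)) (Icc 0 1) :=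
    hu.derivWithin (uniqueDiffOn_Icc zero_lt_one) (by norm_num)
  refine ⟨hu.continuousOn, hu'.continuousOn.sub hg.continuousOn, hf, hg.continuousOn,
    fun x hx => ?_, fun x hx => ?_⟩
  · simpa using (hu.differentiableOn (by norm_num)).hasDerivAt_derivWithin_Icc hx
  · exact (((hu'.differentiableOn (by norm_num)).hasDerivAt_derivWithin_Icc hx).sub
      (hg.hasDerivAt_derivWithin_Icc hx)).congr_deriv
      (by linear_combination hpde x (Ioo_subset_Icc_self hx))

namespace SolvesFirstOrderSystem

variable {z : ℝ} {u p f g : ℝ → ℂ}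

theorem add_mul_eq_exp_mul_add_integral (hs : SolvesFirstOrderSystem z u p f g) {ν : ℂ}
    (hν : ν ^ 2 = -z) {x : ℝ} (hx : x ∈ Icc (0 : ℝ) 1) :
    p x + ν * u x = Complex.exp (ν * x) * (p 0 + ν * u 0)
      + ∫ t in 0..x, Complex.exp (ν * (x - t)) * (f t + ν * g t) := by
  have hIcc : Icc 0 x ⊆ Icc (0 : ℝ) 1 := Icc_subset_Icc_right hx.2
  have hIoo : Ioo 0 x ⊆ Ioo (0 : ℝ) 1 := Ioo_subset_Ioo_right hx.2
  simpa using eq_exp_mul_add_integral_of_hasDerivAt (w := fun t => p t + ν * u t)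
    (r := fun t => f t + ν * g t) hx.1
    ((hs.continuousOn_p.add (continuousOn_const.mul hs.continuousOn_u)).mono hIcc)
    ((hs.continuousOn_f.add (continuousOn_const.mul hs.continuousOn_g)).mono hIcc)
    fun t ht => ((hs.hasDerivAt_p t (hIoo ht)).add
      ((hs.hasDerivAt_u t (hIoo ht)).const_mul ν)).congr_deriv
        (by linear_combination (-u t) * hν)

theorem norm_sub_sin_le {μ : ℝ} (hs : SolvesFirstOrderSystem (μ ^ 2) u p f g)
    (hμ : 0 < μ) (hu0 : u 0 = 0) {x : ℝ} (hx : x ∈ Icc (0 : ℝ) 1) :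
    ‖u x - p 0 / μ * Real.sin (μ * x)‖ ≤ (∫ t in 0..1, ‖f t‖) / μ + ∫ t in 0..1, ‖g t‖ := by
  set ν : ℂ := μ * Complex.I
  have hν : ν ^ 2 = -((μ ^ 2 : ℝ) : ℂ) := by
    push_cast; rw [mul_pow, Complex.I_sq]; ring
  have hνre : ν.re = 0 := by simp [ν]
  have hνnorm : ‖ν‖ = μ := by simp [ν, hμ.le]
  have hplus := hs.add_mul_eq_exp_mul_add_integral hν hx
  have hminus := hs.add_mul_eq_exp_mul_add_integral (ν := -ν) (by rw [neg_sq, hν]) hx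
  have hsin : Complex.exp (ν * x) - Complex.exp (-ν * x) = 2 * Complex.I * Real.sin (μ * x) := by
    simp only [ν]; rw [Complex.ofReal_sin, Complex.sin]; push_cast; ring_nf
    rw [Complex.I_sq]; ring
  have hscale : 2 * ν * (p 0 / μ) = 2 * Complex.I * p 0 := by
    simp only [ν]; field_simp [show (μ : ℂ) ≠ 0 by exact_mod_cast hμ.ne']
  have key : 2 * ν * (u x - p 0 / μ * Real.sin (μ * x))
      = (∫ t in 0..x, Complex.exp (ν * (x - t)) * (f t + ν * g t))
        - ∫ t in 0..x, Complex.exp (-ν * (x - t)) * (f t + -ν * g t) := by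
    rw [hu0, mul_zero, add_zero] at hplus hminus
    linear_combination hplus - hminus + p 0 * hsin - Real.sin (μ * x) * hscale
  have hnorm := congrArg norm key
  rw [norm_mul, norm_mul, hνnorm] at hnorm
  have hνre' : (-ν).re = 0 := by rw [Complex.neg_re, hνre, neg_zero]
  have hR := (norm_sub_le _ _).trans (add_le_add
    (norm_integral_exp_mul_le hνre hs.continuousOn_f hs.continuousOn_g hx)
    (norm_integral_exp_mul_le hνre' hs.continuousOn_f hs.continuousOn_g hx))
  rw [← hnorm, norm_neg, hνnorm, Complex.norm_two] at hR
  rw [div_add' _ _ _ hμ.ne', le_div_iff₀ hμ]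
  linarith

theorem integral_mul_conj_eq_zero (hs : SolvesFirstOrderSystem z u p f g)
    (hu0 : u 0 = 0) (hu1 : u 1 = 0) :
    ∫ x in 0..1, ((f x - z * u x) * conj (u x) + p x * conj (p x + g x)) = 0 := by
  have hconj := Complex.continuous_conj.comp_continuousOn hs.continuousOn_u
  have hftc := integral_eq_sub_of_hasDerivAt_of_le zero_le_one
    (hs.continuousOn_p.mul hconj)
    (fun x hx => (hs.hasDerivAt_p x hx).mul (hs.hasDerivAt_u x hx).star)
    ((((hs.continuousOn_f.sub (continuousOn_const.mul hs.continuousOn_u)).mul hconj).add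
      (hs.continuousOn_p.mul (Complex.continuous_conj.comp_continuousOn
        (hs.continuousOn_p.add hs.continuousOn_g)))).intervalIntegrable_of_Icc zero_le_one)
  simpa [hu0, hu1] using hftc

theorem integral_norm_sq_add_eq (hs : SolvesFirstOrderSystem z u p f g)
    (hu0 : u 0 = 0) (hu1 : u 1 = 0) :
    ∫ x in 0..1, ‖p x + g x‖ ^ 2
      = z * (∫ x in 0..1, ‖u x‖ ^ 2) - (∫ x in 0..1, f x * conj (u x)).re
        + (∫ x in 0..1, g x * conj (p x + g x)).re := by
  have hcu := hs.continuousOn_u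
  have hcv : ContinuousOn (fun x => p x + g x) (Icc 0 1) :=
    hs.continuousOn_p.add hs.continuousOn_g
  have i1 : IntervalIntegrable (fun x => f x * conj (u x)) volume 0 1 :=
    (hs.continuousOn_f.mul (Complex.continuous_conj.comp_continuousOn hcu))
      |>.intervalIntegrable_of_Icc zero_le_one
  have i2 : IntervalIntegrable (fun x => g x * conj (p x + g x)) volume 0 1 :=
    (hs.continuousOn_g.mul (Complex.continuous_conj.comp_continuousOn hcv))
      |>.intervalIntegrable_of_Icc zero_le_one
  have i3 : IntervalIntegrable (fun x => ‖p x + g x‖ ^ 2) volume 0 1 :=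
    (hcv.norm.pow 2).intervalIntegrable_of_Icc zero_le_one
  have i4 : IntervalIntegrable (fun x => z * ‖u x‖ ^ 2) volume 0 1 :=
    (continuousOn_const.mul (hcu.norm.pow 2)).intervalIntegrable_of_Icc zero_le_one
  have i5 : IntervalIntegrable (fun x => ((‖p x + g x‖ ^ 2 - z * ‖u x‖ ^ 2 : ℝ) : ℂ)) volume 0 1 :=
    (Complex.continuous_ofReal.comp_continuousOn ((hcv.norm.pow 2).sub
      (continuousOn_const.mul (hcu.norm.pow 2)))).intervalIntegrable_of_Icc zero_le_one
  have hsplit : ∀ x, (f x - z * u x) * conj (u x) + p x * conj (p x + g x)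
      = (f x * conj (u x) - g x * conj (p x + g x))
        + ((‖p x + g x‖ ^ 2 - z * ‖u x‖ ^ 2 : ℝ) : ℂ) := fun x => by
    push_cast
    rw [← Complex.mul_conj', ← Complex.mul_conj']
    ring
  have hzero := hs.integral_mul_conj_eq_zero hu0 hu1
  rw [intervalIntegral.integral_congr fun x _ => hsplit x, integral_add (i1.sub i2) i5,
    integral_sub i1 i2, intervalIntegral.integral_ofReal,
    integral_sub i3 i4, intervalIntegral.integral_const_mul] at hzero
  have hre := congrArg Complex.re hzero
  simp only [Complex.add_re, Complex.sub_re, Complex.ofReal_re, Complex.zero_re] at hre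
  linarith

theorem integral_norm_sq_le_of_le_half
    (hs : SolvesFirstOrderSystem z u p f g) (hu0 : u 0 = 0) (hu1 : u 1 = 0) (hz : z ≤ 1 / 2) :
    ∫ x in 0..1, ‖u x‖ ^ 2 ≤ 16 * (∫ x in 0..1, ‖f x‖ ^ 2) + 8 * ∫ x in 0..1, ‖g x‖ ^ 2 := by
  have hcv : ContinuousOn (fun x => p x + g x) (Icc 0 1) :=
    hs.continuousOn_p.add hs.continuousOn_g
  have hpoincare := integral_norm_sq_le_integral_norm_sq_of_hasDerivAt hs.continuousOn_u hcv
    hs.hasDerivAt_u hu0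
  have hfu := norm_integral_mul_conj_le zero_le_one hs.continuousOn_f hs.continuousOn_u two_pos
  have hgv := norm_integral_mul_conj_le zero_le_one hs.continuousOn_g hcv one_pos
  have hN0 : 0 ≤ ∫ x in 0..1, ‖u x‖ ^ 2 := integral_nonneg zero_le_one fun _ _ => sq_nonneg _
  have hzN := mul_le_mul_of_nonneg_right hz hN0
  have hre₁ := neg_le_of_abs_le (Complex.abs_re_le_norm (∫ x in 0..1, f x * conj (u x)))
  have hre₂ := Complex.re_le_norm (∫ x in 0..1, g x * conj (p x + g x))
  linarith [hs.integral_norm_sq_add_eq hu0 hu1]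

theorem integral_norm_sq_le_of_half_le {μ α β : ℝ}
    (hs : SolvesFirstOrderSystem (μ ^ 2) u p f g) (hμ : 0 < μ) (hμ2 : 1 / 2 ≤ μ ^ 2)
    (hu0 : u 0 = 0) (hαβ : α < β) (hsub : Icc α β ⊆ Icc 0 1) :
    ∫ x in 0..1, ‖u x‖ ^ 2 ≤ 2304 / (β - α) ^ 3
      * ((∫ x in 0..1, ‖f x‖ ^ 2) + (∫ x in 0..1, ‖g x‖ ^ 2) + ∫ x in α..β, ‖u x‖ ^ 2) := by
  have hL : β - α ≤ 1 := by linarith [(hsub ⟨le_rfl, hαβ.le⟩).1, (hsub ⟨hαβ.le, le_rfl⟩).2]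
  set c := (β - α) ^ 3 / 96
  have hc : 0 < c := by have := sub_pos.2 hαβ; positivity
  have hc1 : c ≤ 1 := by
    have : (β - α) ^ 3 ≤ 1 := pow_le_one₀ (sub_pos.2 hαβ).le hL
    simp only [c]; linarith
  have hmain := integral_norm_sq_le_of_norm_sub_mul_le hs.continuousOn_u
    (by fun_prop : Continuous fun x => Real.sin (μ * x)).continuousOn
    (fun x _ => Real.abs_sin_le_one _) hαβ.le hsub hc
    (cube_div_le_integral_sin_mul_sq hαβ.le hL hμ hμ2)
    (fun x hx => hs.norm_sub_sin_le hμ hu0 hx)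
  set F := ∫ x in 0..1, ‖f x‖ ^ 2
  set G := ∫ x in 0..1, ‖g x‖ ^ 2
  set W := ∫ x in α..β, ‖u x‖ ^ 2
  have hF := sq_integral_le_mul_integral_sq zero_le_one hs.continuousOn_f.norm
  have hG := sq_integral_le_mul_integral_sq zero_le_one hs.continuousOn_g.norm
  have hinv : (1 / μ) ^ 2 ≤ 2 := by
    rw [div_pow, one_pow, div_le_iff₀ (by positivity)]; linarith
  have hR : ((∫ t in 0..1, ‖f t‖) / μ + ∫ t in 0..1, ‖g t‖) ^ 2 ≤ 4 * (F + G) := by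
    rw [div_eq_mul_one_div]
    nlinarith [sq_nonneg ((∫ t in 0..1, ‖f t‖) * (1 / μ) - ∫ t in 0..1, ‖g t‖),
      mul_le_mul hinv hF (sq_nonneg _) zero_le_two, sq_nonneg (∫ t in 0..1, ‖f t‖)]
  have hW0 : 0 ≤ W := integral_nonneg hαβ.le fun _ _ => sq_nonneg _
  have hFG : 0 ≤ F + G := add_nonneg (integral_nonneg zero_le_one fun _ _ => sq_nonneg _)
    (integral_nonneg zero_le_one fun _ _ => sq_nonneg _)
  calc ∫ x in 0..1, ‖u x‖ ^ 2 ≤ 4 / c * W + (4 / c + 2) * (4 * (F + G)) :=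
        hmain.trans (by gcongr)
    _ ≤ 24 / c * (F + G + W) := by
        have h8 : 8 ≤ 8 / c := by rw [le_div_iff₀ hc]; linarith
        have hdiff : 24 / c * (F + G + W) - (4 / c * W + (4 / c + 2) * (4 * (F + G)))
            = 20 / c * W + (8 / c - 8) * (F + G) := by ring
        nlinarith [mul_nonneg (sub_nonneg.2 h8) hFG,
          mul_nonneg (div_pos (by norm_num : (0 : ℝ) < 20) hc).le hW0]
    _ = 2304 / (β - α) ^ 3 * (F + G + W) := by simp only [c]; field_simp; ring

theorem integral_norm_sq_le {α β : ℝ} (hs : SolvesFirstOrderSystem z u p f g)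
    (hu0 : u 0 = 0) (hu1 : u 1 = 0) (hαβ : α < β) (hsub : Icc α β ⊆ Icc 0 1) :
    ∫ x in 0..1, ‖u x‖ ^ 2 ≤ 2304 / (β - α) ^ 3
      * ((∫ x in 0..1, ‖f x‖ ^ 2) + (∫ x in 0..1, ‖g x‖ ^ 2) + ∫ x in α..β, ‖u x‖ ^ 2) := by
  rcases le_or_gt z (1 / 2) with hz | hz
  · have hL : (β - α) ^ 3 ≤ 1 := pow_le_one₀ (sub_pos.2 hαβ).le
      (by linarith [(hsub ⟨le_rfl, hαβ.le⟩).1, (hsub ⟨hαβ.le, le_rfl⟩).2])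
    have hC : 16 ≤ 2304 / (β - α) ^ 3 := by
      rw [le_div_iff₀ (by have := sub_pos.2 hαβ; positivity)]; linarith
    have hF := integral_nonneg (μ := volume) zero_le_one fun x _ => sq_nonneg ‖f x‖
    have hG := integral_nonneg (μ := volume) zero_le_one fun x _ => sq_nonneg ‖g x‖
    have hW := integral_nonneg (μ := volume) hαβ.le fun x _ => sq_nonneg ‖u x‖
    nlinarith [hs.integral_norm_sq_le_of_le_half hu0 hu1 hz, mul_le_mul_of_nonneg_right hC hF,
      mul_le_mul_of_nonneg_right hC hG, mul_nonneg (by linarith : (0 : ℝ) ≤ 2304 / (β - α) ^ 3) hW]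
  · obtain ⟨μ, hμ, rfl⟩ : ∃ μ, 0 < μ ∧ z = μ ^ 2 :=
      ⟨√z, by positivity, (Real.sq_sqrt (by linarith)).symm⟩
    exact hs.integral_norm_sq_le_of_half_le hμ hz.le hu0 hαβ hsub

end SolvesFirstOrderSystem

theorem one_dim_mode_estimate
    (ωx : Set ℝ) (hωopen : IsOpen ωx) (hωne : ωx.Nonempty)
    (hωsub : ωx ⊆ Ioo (0 : ℝ) 1) :
    ∃ C > 0, ∀ z : ℝ, ∀ u f g : ℝ → ℂ,
      ContDiffOn ℝ 2 u (Icc (0 : ℝ) 1) →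
      ContDiffOn ℝ 1 f (Icc (0 : ℝ) 1) →
      ContDiffOn ℝ 1 g (Icc (0 : ℝ) 1) →
      (∀ x ∈ Icc (0 : ℝ) 1,
        derivWithin (derivWithin u (Icc (0 : ℝ) 1)) (Icc (0 : ℝ) 1) x + (z : ℂ) * u x
          = f x + derivWithin g (Icc (0 : ℝ) 1) x) →
      u 0 = 0 → u 1 = 0 →
      (∫ x in (0 : ℝ)..1, ‖u x‖ ^ 2) ≤
        C * ((∫ x in (0 : ℝ)..1, (‖f x‖ ^ 2 + ‖g x‖ ^ 2)) + ∫ x in ωx, ‖u x‖ ^ 2) := by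
  obtain ⟨α, β, hαβ, hω⟩ := hωopen.exists_Ioo_subset hωne
  obtain ⟨hα, hβ⟩ := (Ioo_subset_Ioo_iff hαβ).1 (hω.trans hωsub)
  refine ⟨2304 / (β - α) ^ 3, by have := sub_pos.2 hαβ; positivity,
    fun z u f g hu hf hg hpde hu0 hu1 => ?_⟩
  have hs := SolvesFirstOrderSystem.of_contDiffOn hu hf.continuousOn
    (hg.differentiableOn (by norm_num)) hpde
  have hu2 : ContinuousOn (fun x => ‖u x‖ ^ 2) (Icc 0 1) := hs.continuousOn_u.norm.pow 2
  have hW : ∫ x in α..β, ‖u x‖ ^ 2 ≤ ∫ x in ωx, ‖u x‖ ^ 2 := by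
    rw [intervalIntegral.integral_of_le hαβ.le, integral_Ioc_eq_integral_Ioo]
    exact setIntegral_mono_set (hu2.integrableOn_Icc.mono_set (hωsub.trans Ioo_subset_Icc_self))
      (ae_of_all _ fun _ => sq_nonneg _) hω.eventuallyLE
  rw [intervalIntegral.integral_add (f := fun x => ‖f x‖ ^ 2) (g := fun x => ‖g x‖ ^ 2)
    ((hs.continuousOn_f.norm.pow 2).intervalIntegrable_of_Icc zero_le_one)
    ((hs.continuousOn_g.norm.pow 2).intervalIntegrable_of_Icc zero_le_one)]
  calc ∫ x in 0..1, ‖u x‖ ^ 2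
      ≤ 2304 / (β - α) ^ 3 * ((∫ x in 0..1, ‖f x‖ ^ 2) + (∫ x in 0..1, ‖g x‖ ^ 2)
          + ∫ x in α..β, ‖u x‖ ^ 2) :=
        hs.integral_norm_sq_le hu0 hu1 hαβ (Icc_subset_Icc hα hβ)
    _ ≤ _ := by gcongr
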